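/- For all real α, β, ρ, x, all natural numbers n, and every natural number m ≥ 1: B^{1,1,q}_{n+m;x}(α,β,ρ) = Σ_{r=0}^{n} Σ_{j=0}^{m} S^{1,1,q}_{m,j}(α,β,ρ) · q^{r(βj − αm − ρ)} · binom(n,r)_{q^{−α}} · x^j · B^{1,1,q}_{r;x}(α,β,0) · Π_{i=0}^{n−r−1} [βj − ρ − α(m+i)]_q. (Spivey-type formula for Type II generalized q-Bell polynomials; the factor x^j, coming from multiplying S^{1,1,q}_{r,k−j}(α,β,0) by x^k and summing over k, is required.) -/

import Mathlib

/-- The `q`-bracket `[t]_q = (q^t - 1)/(q - 1)` (real exponentiation). -/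
noncomputable def qBracket (q t : ℝ) : ℝ := (q ^ t - 1) / (q - 1)

open Classical in
/-- The `Q`-binomial coefficient: the sum of `Q^(t₁+⋯+t_{n-k})` over all weakly
increasing integer tuples `0 ≤ t₁ ≤ ⋯ ≤ t_{n-k} ≤ k` when `k ≤ n`, and `0` when `k > n`. -/
noncomputable def qBinom (Q : ℝ) (n k : ℕ) : ℝ :=
  if k ≤ n then
    ∑ f ∈ Finset.univ.filter (fun f : Fin (n - k) → Fin (k + 1) => Monotone f),
      Q ^ (∑ i, (f i : ℕ))
  else 0

/-- The generalized `q`-Stirling numbers `S^{c,d}_{s,q}[n,k]`. -/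
noncomputable def genStirlingCD (c d s q : ℝ) : ℕ → ℕ → ℝ
  | 0, 0 => 1
  | 0, _ + 1 => 0
  | _ + 1, 0 => 0
  | n + 1, k + 1 =>
    if k + 1 ≤ n + 1 then
      q ^ (c * (n : ℝ) + d + ((n : ℝ) - (k : ℝ)) * (s - 1)) * genStirlingCD c d s q n k
        + qBracket q (c * (n : ℝ) + d + ((n : ℝ) - (k : ℝ) - 1) * (s - 1)) *
            genStirlingCD c d s q n (k + 1)
    else 0

/-- The Type II generalized `q`-Stirling numbers of Remmel and Wachs,
via the identification `S^{1,1,q}_{n,k}(α,β,ρ) = S^{β-α,-ρ}_{1-β,q}[n,k]`. -/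
noncomputable def typeIIStirling (q α β ρ : ℝ) (n k : ℕ) : ℝ :=
  genStirlingCD (β - α) (-ρ) (1 - β) q n k

/-- The Type II generalized Bell polynomial `B^{1,1,q}_{n;x}(α,β,ρ)`. -/
noncomputable def typeIIBell (q α β ρ : ℝ) (n : ℕ) (x : ℝ) : ℝ :=
  ∑ k ∈ Finset.range (n + 1), typeIIStirling q α β ρ n k * x ^ k

/-!
Write `V f (x) = ((q - 1) x + 1) f (q^β x)`. The recursion of the Type II Stirling numbers says
`(q - 1) B_{n+1} = q^(-αn-ρ) V B_n - B_n` as long as the `k = 0` term `[-αn-ρ]_q S_{n,0}` of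
the recursion vanishes (`n ≥ 1` or `ρ = 0`). Hence `B_{m+n}` is `∏_{i<n} (c Q^i V - 1)/(q - 1)`
applied to `B_m`, with `c = q^(-αm-ρ)` and `Q = q^(-α)`. As `V (x^j g) = q^(βj) x^j V g`, on the
monomial `x^j` of `B_m` the constant `c` becomes `c q^(βj)`, and the `q`-Chu–Vandermonde identity
`∏_{i<n} (c Q^i V - 1) = ∑_r binom(n,r)_Q c^r ∏_{i<r} (Q^i V - 1) ∏_{i<n-r} (c Q^i - 1)`
splits the product; `∏_{i<r} (Q^i V - 1)/(q - 1)` applied to `1` is `B_r(α, β, 0)`. The identity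
follows by induction on `n` from the `q`-Pascal rule and
`c Q^n V - 1 = c Q^(n-r) (Q^r V - 1) + (c Q^(n-r) - 1)`.
-/

open Finset

open Classical in
noncomputable def monotoneTupleSum (Q : ℝ) (a b : ℕ) : ℝ :=
  ∑ f ∈ univ.filter (fun f : Fin a → Fin (b + 1) => Monotone f), Q ^ ∑ i, (f i : ℕ)

lemma monotoneTupleSum_zero_left (Q : ℝ) (b : ℕ) : monotoneTupleSum Q 0 b = 1 := by
  simp [monotoneTupleSum, Subsingleton.elim _ (Fin.elim0 : Fin 0 → Fin (b + 1)),
    Subsingleton.monotone]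

lemma monotoneTupleSum_zero_right (Q : ℝ) (a : ℕ) : monotoneTupleSum Q a 0 = 1 := by
  simp [monotoneTupleSum, Subsingleton.monotone', Fin.val_eq_zero]

open Classical in
lemma sum_monotone_head_eq_zero (Q : ℝ) (a b : ℕ) :
    ∑ f ∈ univ.filter (fun f : Fin (a + 1) → Fin (b + 1) => Monotone f ∧ f 0 = 0),
      Q ^ ∑ i, (f i : ℕ) = monotoneTupleSum Q a b := by
  refine sum_nbij' (fun f => Fin.tail f) (fun g => Fin.cons 0 g) ?_ ?_ ?_ ?_ ?_
  · simp only [mem_filter, mem_univ, true_and]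
    exact fun f hf => hf.1.comp Fin.strictMono_succ.monotone
  · simp only [mem_filter, mem_univ, true_and, Fin.cons_zero, and_true]
    intro g hg i j hij
    cases i using Fin.cases with
    | zero => simp
    | succ i =>
      cases j using Fin.cases with
      | zero => exact absurd hij (Fin.succ_pos i).not_ge
      | succ j => simpa using hg (Fin.succ_le_succ_iff.mp hij)
  · simp only [mem_filter, mem_univ, true_and]
    intro f hf
    rw [← hf.2, Fin.cons_self_tail]
  · simp
  · simp only [mem_filter, mem_univ, true_and]
    intro f hf
    simp [Fin.sum_univ_succ, hf.2, Fin.tail]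

open Classical in
lemma sum_monotone_head_ne_zero (Q : ℝ) (a b : ℕ) :
    ∑ f ∈ univ.filter (fun f : Fin (a + 1) → Fin (b + 2) => Monotone f ∧ f 0 ≠ 0),
      Q ^ ∑ i, (f i : ℕ) = Q ^ (a + 1) * monotoneTupleSum Q (a + 1) b := by
  have ne_zero {f : Fin (a + 1) → Fin (b + 2)} (hf : Monotone f ∧ f 0 ≠ 0) (i) : f i ≠ 0 :=
    Fin.pos_iff_ne_zero.mp ((Fin.pos_iff_ne_zero.mpr hf.2).trans_le (hf.1 (Fin.zero_le i)))
  rw [monotoneTupleSum, mul_sum]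
  refine sum_bij' (fun f hf i => (f i).pred (ne_zero (mem_filter.mp hf).2 i))
    (fun g _ i => (g i).succ) ?_ ?_ ?_ ?_ ?_
  · simp only [mem_filter, mem_univ, true_and]
    exact fun f hf i j hij => Fin.pred_le_pred_iff.mpr (hf.1 hij)
  · simp only [mem_filter, mem_univ, true_and]
    exact fun g hg => ⟨fun i j hij => Fin.succ_le_succ_iff.mpr (hg hij), Fin.succ_ne_zero _⟩
  · intro f hf
    simp
  · intro g hg
    simp
  · intro f hf
    have hsum : ∑ i, (f i : ℕ)
        = (a + 1) + ∑ i, ((f i).pred (ne_zero (mem_filter.mp hf).2 i) : ℕ) := by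
      calc ∑ i, (f i : ℕ) = ∑ i, (1 + ((f i).pred (ne_zero (mem_filter.mp hf).2 i) : ℕ)) :=
            sum_congr rfl fun i _ => by
              have := Fin.pos_iff_ne_zero.mpr (ne_zero (mem_filter.mp hf).2 i)
              rw [Fin.val_pred]; omega
        _ = _ := by simp [sum_add_distrib]
    rw [hsum, pow_add]

open Classical in
lemma monotoneTupleSum_succ_succ (Q : ℝ) (a b : ℕ) :
    monotoneTupleSum Q (a + 1) (b + 1)
      = Q ^ (a + 1) * monotoneTupleSum Q (a + 1) b + monotoneTupleSum Q a (b + 1) := by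
  rw [← sum_monotone_head_ne_zero, ← sum_monotone_head_eq_zero Q a (b + 1), monotoneTupleSum,
    ← sum_filter_add_sum_filter_not _ (fun f => f 0 = 0), filter_filter, filter_filter, add_comm]

lemma qBinom_eq_monotoneTupleSum (Q : ℝ) {n k : ℕ} (h : k ≤ n) :
    qBinom Q n k = monotoneTupleSum Q (n - k) k := by
  rw [qBinom, if_pos h, monotoneTupleSum]

lemma qBinom_of_lt (Q : ℝ) {n k : ℕ} (h : n < k) : qBinom Q n k = 0 := by
  rw [qBinom, if_neg h.not_ge]

lemma qBinom_zero_right (Q : ℝ) (n : ℕ) : qBinom Q n 0 = 1 := by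
  rw [qBinom_eq_monotoneTupleSum Q n.zero_le, monotoneTupleSum_zero_right]

lemma qBinom_self (Q : ℝ) (n : ℕ) : qBinom Q n n = 1 := by
  rw [qBinom_eq_monotoneTupleSum Q le_rfl, Nat.sub_self, monotoneTupleSum_zero_left]

lemma qBinom_succ_succ (Q : ℝ) (n k : ℕ) :
    qBinom Q (n + 1) (k + 1) = Q ^ (n - k) * qBinom Q n k + qBinom Q n (k + 1) := by
  obtain h | rfl | h := lt_trichotomy k n
  · obtain ⟨a, rfl⟩ := Nat.exists_eq_add_of_lt h
    rw [qBinom_eq_monotoneTupleSum Q (by omega), qBinom_eq_monotoneTupleSum Q (by omega),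
      qBinom_eq_monotoneTupleSum Q (by omega), show k + a + 1 + 1 - (k + 1) = a + 1 by omega,
      show k + a + 1 - k = a + 1 by omega, show k + a + 1 - (k + 1) = a by omega,
      monotoneTupleSum_succ_succ]
  · rw [qBinom_self, qBinom_self, qBinom_of_lt Q k.lt_succ_self, Nat.sub_self]
    ring
  · rw [qBinom_of_lt Q (by omega), qBinom_of_lt Q h, qBinom_of_lt Q (by omega)]
    ring

noncomputable def chuCoeff (q c Q : ℝ) (n r : ℕ) : ℝ :=
  c ^ r * qBinom Q n r * ∏ i ∈ range (n - r), (c * Q ^ i - 1) / (q - 1)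

lemma chuCoeff_of_lt (q c Q : ℝ) {n r : ℕ} (h : n < r) : chuCoeff q c Q n r = 0 := by
  rw [chuCoeff, qBinom_of_lt Q h, mul_zero, zero_mul]

lemma chuCoeff_succ_zero (q c Q : ℝ) (n : ℕ) :
    chuCoeff q c Q (n + 1) 0 = chuCoeff q c Q n 0 * ((c * Q ^ n - 1) / (q - 1)) := by
  simp only [chuCoeff, qBinom_zero_right, Nat.sub_zero, prod_range_succ]
  ring

lemma chuCoeff_succ_succ (q c Q : ℝ) {n r : ℕ} (h : r ≤ n) :
    chuCoeff q c Q (n + 1) (r + 1) = chuCoeff q c Q n r * (c * Q ^ (n - r))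
      + chuCoeff q c Q n (r + 1) * ((c * Q ^ (n - (r + 1)) - 1) / (q - 1)) := by
  obtain h | rfl := h.lt_or_eq
  · simp only [chuCoeff, qBinom_succ_succ, show n + 1 - (r + 1) = n - (r + 1) + 1 by omega,
      show n - r = n - (r + 1) + 1 by omega, prod_range_succ]
    ring
  · simp only [chuCoeff, qBinom_succ_succ, qBinom_of_lt Q r.lt_succ_self, Nat.sub_self]
    ring

lemma chuCoeff_rpow {q : ℝ} (hq : 0 < q) (t a : ℝ) (n r : ℕ) :
    chuCoeff q (q ^ t) (q ^ a) n r
      = q ^ (r * t) * qBinom (q ^ a) n r * ∏ i ∈ range (n - r), qBracket q (t + a * i) := by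
  rw [mul_comm (r : ℝ) t]
  simp only [chuCoeff, qBracket, ← Real.rpow_mul_natCast hq.le, ← Real.rpow_add hq, mul_comm a]

section BellOp

variable (q p : ℝ)

/-- `(c V - 1) / (q - 1)` in the notation of the header, with `p = q^β`. -/
noncomputable def bellOp (c : ℝ) : Module.End ℝ (ℝ → ℝ) where
  toFun f x := (c * ((q - 1) * x + 1) * f (p * x) - f x) / (q - 1)
  map_add' f g := by ext x; simp only [Pi.add_apply]; ring
  map_smul' a f := by ext x; simp only [Pi.smul_apply, smul_eq_mul, RingHom.id_apply]; ring

lemma bellOp_apply (c : ℝ) (f : ℝ → ℝ) (x : ℝ) :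
    bellOp q p c f x = (c * ((q - 1) * x + 1) * f (p * x) - f x) / (q - 1) := rfl

variable {q} in
lemma bellOp_mul (hq : q ≠ 1) (a c : ℝ) (f : ℝ → ℝ) :
    bellOp q p (a * c) f = a • bellOp q p c f + ((a - 1) / (q - 1)) • f := by
  have : q - 1 ≠ 0 := sub_ne_zero.mpr hq
  ext x
  simp only [bellOp_apply, Pi.add_apply, Pi.smul_apply, smul_eq_mul]
  field_simp
  ring

lemma bellOp_monomial_mul (c : ℝ) (j : ℕ) (f : ℝ → ℝ) :
    bellOp q p c (fun x => x ^ j * f x) = fun x => x ^ j * bellOp q p (c * p ^ j) f x := by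
  ext x
  simp only [bellOp_apply]
  ring

noncomputable def bellOpProd (c Q : ℝ) : ℕ → Module.End ℝ (ℝ → ℝ)
  | 0 => 1
  | n + 1 => bellOp q p (c * Q ^ n) * bellOpProd c Q n

lemma bellOpProd_zero (c Q : ℝ) : bellOpProd q p c Q 0 = 1 := rfl

lemma bellOpProd_succ (c Q : ℝ) (n : ℕ) :
    bellOpProd q p c Q (n + 1) = bellOp q p (c * Q ^ n) * bellOpProd q p c Q n := rfl

lemma bellOpProd_monomial_mul (c Q : ℝ) (j n : ℕ) (f : ℝ → ℝ) :
    bellOpProd q p c Q n (fun x => x ^ j * f x)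
      = fun x => x ^ j * bellOpProd q p (c * p ^ j) Q n f x := by
  induction n with
  | zero => rfl
  | succ n ih =>
    rw [bellOpProd_succ, bellOpProd_succ, Module.End.mul_apply, ih, bellOp_monomial_mul,
      Module.End.mul_apply, mul_right_comm]

variable {q} in
lemma bellOp_bellOpProd_one (hq : q ≠ 1) (c : ℝ) {Q : ℝ} {n r : ℕ} (hr : r ≤ n)
    (f : ℝ → ℝ) :
    bellOp q p (c * Q ^ n) (bellOpProd q p 1 Q r f)
      = (c * Q ^ (n - r)) • bellOpProd q p 1 Q (r + 1) f
        + ((c * Q ^ (n - r) - 1) / (q - 1)) • bellOpProd q p 1 Q r f := by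
  rw [← Nat.sub_add_cancel hr, pow_add, ← mul_assoc, Nat.add_sub_cancel, bellOp_mul p hq,
    ← one_mul (Q ^ r)]
  rfl

variable {q} in
lemma bellOpProd_eq_sum (hq : q ≠ 1) (c Q : ℝ) (n : ℕ) (f : ℝ → ℝ) :
    bellOpProd q p c Q n f
      = ∑ r ∈ range (n + 1), chuCoeff q c Q n r • bellOpProd q p 1 Q r f := by
  induction n with
  | zero => simp [chuCoeff, qBinom_zero_right, bellOpProd_zero]
  | succ n ih =>
    set g := fun r => bellOpProd q p 1 Q r f
    rw [bellOpProd_succ, Module.End.mul_apply, ih, map_sum]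
    set v := fun r => (c * Q ^ (n - r) - 1) / (q - 1)
    have last_vanishes :
        ∑ r ∈ range (n + 1), (chuCoeff q c Q n (r + 1) * v (r + 1)) • g (r + 1)
          = ∑ r ∈ range n, (chuCoeff q c Q n (r + 1) * v (r + 1)) • g (r + 1) := by
      rw [sum_range_succ, chuCoeff_of_lt q c Q n.lt_succ_self, zero_mul, zero_smul, add_zero]
    calc ∑ r ∈ range (n + 1), bellOp q p (c * Q ^ n) (chuCoeff q c Q n r • g r)
        = ∑ r ∈ range (n + 1), (chuCoeff q c Q n r * (c * Q ^ (n - r))) • g (r + 1)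
          + ∑ r ∈ range (n + 1), (chuCoeff q c Q n r * v r) • g r := by
          rw [← sum_add_distrib]
          refine sum_congr rfl fun r hr => ?_
          rw [map_smul, bellOp_bellOpProd_one p hq c (mem_range_succ_iff.mp hr), smul_add,
            smul_smul, smul_smul]
      _ = ∑ r ∈ range (n + 2), chuCoeff q c Q (n + 1) r • g r := by
          rw [sum_range_succ' _ (n + 1),
            sum_range_succ' (fun r => (chuCoeff q c Q n r * v r) • g r), ← last_vanishes,
            chuCoeff_succ_zero, ← add_assoc, ← sum_add_distrib]
          congr 1
          refine sum_congr rfl fun r hr => ?_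
          rw [chuCoeff_succ_succ q c Q (mem_range_succ_iff.mp hr), add_smul]

end BellOp

section TypeII

variable (q α β ρ : ℝ)

lemma typeIIStirling_of_lt {n k : ℕ} (h : n < k) : typeIIStirling q α β ρ n k = 0 := by
  obtain ⟨k, rfl⟩ := Nat.exists_eq_add_of_lt h
  cases n with
  | zero => simp [typeIIStirling, genStirlingCD]
  | succ n => simp [typeIIStirling, genStirlingCD, show ¬ n + 1 + k ≤ n by omega]

lemma typeIIStirling_succ_zero (n : ℕ) : typeIIStirling q α β ρ (n + 1) 0 = 0 := by
  simp [typeIIStirling, genStirlingCD]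

lemma typeIIStirling_succ_succ (n k : ℕ) :
    typeIIStirling q α β ρ (n + 1) (k + 1)
      = q ^ (β * k - α * n - ρ) * typeIIStirling q α β ρ n k
        + qBracket q (β * (k + 1) - α * n - ρ) * typeIIStirling q α β ρ n (k + 1) := by
  obtain h | h := le_or_gt k n
  · simp only [typeIIStirling, genStirlingCD, add_le_add_iff_right, if_pos h]
    ring_nf
  · rw [typeIIStirling_of_lt _ _ _ _ (by omega : n + 1 < k + 1), typeIIStirling_of_lt _ _ _ _ h,
      typeIIStirling_of_lt _ _ _ _ (by omega : n < k + 1)]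
    ring

lemma typeIIBell_zero : typeIIBell q α β ρ 0 = fun _ => 1 := by
  ext x
  simp [typeIIBell, typeIIStirling, genStirlingCD]

end TypeII

lemma typeIIBell_succ {q : ℝ} (hq : 0 < q) (hq1 : q ≠ 1) (α β ρ : ℝ) {n : ℕ}
    (hn : 1 ≤ n ∨ ρ = 0) :
    typeIIBell q α β ρ (n + 1)
      = bellOp q (q ^ β) (q ^ (-α * n - ρ)) (typeIIBell q α β ρ n) := by
  have hq1' : q - 1 ≠ 0 := sub_ne_zero.mpr hq1
  have hpow (k : ℕ) : q ^ (-α * n - ρ) * (q ^ β) ^ k = q ^ (β * k - α * n - ρ) := by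
    rw [← Real.rpow_mul_natCast hq.le, ← Real.rpow_add hq]
    ring_nf
  have hbottom : qBracket q (β * (0 : ℕ) - α * n - ρ) * typeIIStirling q α β ρ n 0 = 0 := by
    rcases n with _ | n
    · simp [(hn.resolve_left (by omega)), qBracket]
    · rw [typeIIStirling_succ_zero, mul_zero]
  ext x
  calc typeIIBell q α β ρ (n + 1) x
      = ∑ k ∈ range (n + 1), typeIIStirling q α β ρ (n + 1) (k + 1) * x ^ (k + 1) := by
        rw [typeIIBell, sum_range_succ', typeIIStirling_succ_zero, zero_mul, add_zero]
    _ = ∑ k ∈ range (n + 1),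
            q ^ (β * k - α * n - ρ) * typeIIStirling q α β ρ n k * x ^ (k + 1)
        + ∑ k ∈ range (n + 2),
            qBracket q (β * k - α * n - ρ) * typeIIStirling q α β ρ n k * x ^ k := by
        rw [sum_range_succ' _ (n + 1), pow_zero, mul_one, hbottom, add_zero, ← sum_add_distrib]
        refine sum_congr rfl fun k _ => ?_
        rw [typeIIStirling_succ_succ]
        push_cast
        ring
    _ = ∑ k ∈ range (n + 1),
          (q ^ (β * k - α * n - ρ) * typeIIStirling q α β ρ n k * x ^ (k + 1)
            + qBracket q (β * k - α * n - ρ) * typeIIStirling q α β ρ n k * x ^ k) := by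
        rw [sum_range_succ _ (n + 1), typeIIStirling_of_lt q α β ρ n.lt_succ_self, mul_zero,
          zero_mul, add_zero, sum_add_distrib]
    _ = bellOp q (q ^ β) (q ^ (-α * n - ρ)) (typeIIBell q α β ρ n) x := by
        rw [bellOp_apply, typeIIBell, typeIIBell, mul_sum, ← sum_sub_distrib, sum_div]
        refine sum_congr rfl fun k _ => ?_
        rw [← hpow, qBracket, ← hpow]
        field_simp
        ring

lemma typeIIBell_add {q : ℝ} (hq : 0 < q) (hq1 : q ≠ 1) (α β ρ : ℝ) {m : ℕ}
    (hm : 1 ≤ m ∨ ρ = 0) (n : ℕ) :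
    typeIIBell q α β ρ (m + n)
      = bellOpProd q (q ^ β) (q ^ (-α * m - ρ)) (q ^ (-α)) n (typeIIBell q α β ρ m) := by
  induction n with
  | zero => rfl
  | succ n ih =>
    rw [← add_assoc, typeIIBell_succ hq hq1 α β ρ (hm.imp (by omega) id), ih, bellOpProd_succ,
      Module.End.mul_apply, ← Real.rpow_mul_natCast hq.le, ← Real.rpow_add hq]
    push_cast
    ring_nf

/-- Spivey-type formula for Type II generalized `q`-Bell polynomials. -/
theorem spivey_typeII_bell (q : ℝ) (hq : 0 < q) (hq1 : q ≠ 1) (α β ρ x : ℝ) (n m : ℕ)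
    (hm : 1 ≤ m) :
    typeIIBell q α β ρ (n + m) x
    = ∑ r ∈ Finset.range (n + 1), ∑ j ∈ Finset.range (m + 1),
        typeIIStirling q α β ρ m j *
          q ^ ((r : ℝ) * (β * (j : ℝ) - α * (m : ℝ) - ρ)) *
          qBinom (q ^ (-α)) n r * x ^ j * typeIIBell q α β 0 r x *
          ∏ i ∈ Finset.range (n - r),
            qBracket q (β * (j : ℝ) - ρ - α * ((m : ℝ) + (i : ℝ))) := by
  have bell_rho_zero (r : ℕ) :
      typeIIBell q α β 0 r = bellOpProd q (q ^ β) 1 (q ^ (-α)) r (fun _ => 1) := by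
    simpa [typeIIBell_zero] using typeIIBell_add hq hq1 α β 0 (m := 0) (Or.inr rfl) r
  have bell_m : typeIIBell q α β ρ m
      = ∑ j ∈ range (m + 1),
          typeIIStirling q α β ρ m j • fun x => x ^ j * (fun _ => 1) x := by
    ext x
    simp [typeIIBell]
  have hc (j : ℕ) : q ^ (-α * m - ρ) * (q ^ β) ^ j = q ^ (β * j - α * m - ρ) := by
    rw [← Real.rpow_mul_natCast hq.le, ← Real.rpow_add hq]
    ring_nf
  rw [add_comm n m, typeIIBell_add hq hq1 α β ρ (Or.inl hm), bell_m, map_sum, Finset.sum_apply,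
    sum_comm]
  refine sum_congr rfl fun j _ => ?_
  rw [map_smul, bellOpProd_monomial_mul, hc, bellOpProd_eq_sum _ hq1, Pi.smul_apply,
    Finset.sum_apply, smul_eq_mul, mul_sum, mul_sum]
  refine sum_congr rfl fun r _ => ?_
  rw [Pi.smul_apply, smul_eq_mul, chuCoeff_rpow hq, ← bell_rho_zero]
  have hbracket (i : ℕ) : β * j - α * m - ρ + -α * i = β * j - ρ - α * (m + i) := by ring
  simp only [hbracket]
  ring
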